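/- arXiv:1612.07269 — 2 statements merged into one kernel-verified Lean document; each statement's English description precedes it below -/
import Mathlib

section
/- Let f : ℝ → ℝ and x0 ∈ ℝ be such that either (a) f is nonincreasing on (−∞, x0] and nondecreasing on [x0, ∞), or (b) f is nondecreasing on (−∞, x0] and nonincreasing on [x0, ∞) (i.e., f has a single optimum). Let X be a real-valued random variable and Y = f(X) almost surely, with the law of Y atomless. Then for every x such that 0 < F1(x) < 1 and 0 < F2(f(x)) < 1, one has λ(x, f(x)) = 1. -/
/-!
Up to a null set, `Y = f(X)` and `Y ≠ f(x)`. Comparing `f(X)` with `f(x)` on the monotone branch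
of `f` containing `x` shows that one of the events `{X ≤ x}`, `{Y ≤ f x}` is a.e. contained in the
other, or that they are a.e. disjoint, or that they a.e. cover the space. Accordingly
`H(x, f x)` attains the upper Fréchet–Hoeffding bound `min F1 F2` or the lower bound
`max (F1 + F2 - 1) 0`, and at either bound the relative distance is `1`.
-/

open MeasureTheory Set

/-- The relative distance function `λ` of the paper, expressed in terms of the
joint CDF value `H = H(x,y)` and the marginal CDF values `F1 = F1(x)`,
`F2 = F2(y)`. -/
noncomputable def relDist (H F1 F2 : ℝ) : ℝ :=
  if F1 * F2 ≤ H then (H - F1 * F2) / (min F1 F2 - F1 * F2)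
  else (H - F1 * F2) / (max (F1 + F2 - 1) 0 - F1 * F2)

lemma relDist_min_self {F1 F2 : ℝ} (h1 : 0 < F1) (h1' : F1 < 1) (h2 : 0 < F2) (h2' : F2 < 1) :
    relDist (min F1 F2) F1 F2 = 1 := by
  have hpos : 0 < min F1 F2 - F1 * F2 := by
    rcases min_choice F1 F2 with h | h <;> rw [h] <;> nlinarith
  rw [relDist, if_pos (by linarith), div_self hpos.ne']

lemma relDist_max_self {F1 F2 : ℝ} (h1 : 0 < F1) (h1' : F1 < 1) (h2 : 0 < F2) (h2' : F2 < 1) :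
    relDist (max (F1 + F2 - 1) 0) F1 F2 = 1 := by
  have hneg : max (F1 + F2 - 1) 0 - F1 * F2 < 0 := by
    rcases max_choice (F1 + F2 - 1) 0 with h | h <;> rw [h] <;> nlinarith
  rw [relDist, if_neg (by linarith), div_self hneg.ne]

section FrechetHoeffdingBounds

variable {Ω : Type*} [MeasurableSpace Ω] {μ : Measure Ω} [IsProbabilityMeasure μ] {A B : Set Ω}

lemma measureReal_inter_eq_min_of_ae_subset (h : A ≤ᵐ[μ] B) :
    μ.real (A ∩ B) = min (μ.real A) (μ.real B) := by
  have hA : μ.real (A ∩ B) = μ.real A := by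
    refine measureReal_congr ?_
    filter_upwards [h] with ω hω
    exact propext ⟨And.left, fun hωA => ⟨hωA, hω hωA⟩⟩
  rw [hA, min_eq_left (hA ▸ measureReal_mono inter_subset_right)]

lemma measureReal_inter_eq_min_of_ae_supset (h : B ≤ᵐ[μ] A) :
    μ.real (A ∩ B) = min (μ.real A) (μ.real B) := by
  rw [inter_comm, min_comm, measureReal_inter_eq_min_of_ae_subset h]

lemma measureReal_inter_eq_max_of_inter_null (hB : MeasurableSet B) (h : μ (A ∩ B) = 0) :
    μ.real (A ∩ B) = max (μ.real A + μ.real B - 1) 0 := by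
  have hAB := measureReal_union_add_inter (μ := μ) (s := A) hB
  have hle : μ.real (A ∪ B) ≤ 1 := measureReal_le_one
  rw [measureReal_def μ (A ∩ B), h, ENNReal.toReal_zero] at hAB ⊢
  rw [max_eq_right (by linarith)]

lemma measureReal_inter_eq_max_of_union_ae_univ (hB : MeasurableSet B) (h : μ (A ∪ B)ᶜ = 0) :
    μ.real (A ∩ B) = max (μ.real A + μ.real B - 1) 0 := by
  have hAB := measureReal_union_add_inter (μ := μ) (s := A) hB
  rw [measureReal_congr (ae_eq_univ.2 h), probReal_univ] at hAB
  rw [max_eq_left (by linarith [measureReal_nonneg (μ := μ) (s := A ∩ B)])]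
  linarith

end FrechetHoeffdingBounds

section SublevelEvents

variable {Ω : Type*} [MeasurableSpace Ω] {μ : Measure Ω} {X Y : Ω → ℝ} {f : ℝ → ℝ} {x : ℝ}

lemma measure_inter_null_of_isMinOn (hXY : ∀ᵐ ω ∂μ, Y ω = f (X ω))
    (hatom : μ {ω | Y ω = f x} = 0) (hmin : IsMinOn f (Iic x) x) :
    μ ({ω | X ω ≤ x} ∩ {ω | Y ω ≤ f x}) = 0 := by
  rw [measure_eq_zero_iff_ae_notMem] at hatom ⊢
  filter_upwards [hXY, hatom] with ω hω hne ⟨hωX, hωY⟩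
  exact hne (le_antisymm hωY (hω ▸ hmin (mem_Iic.2 hωX)))

lemma ae_subset_of_isMinOn (hXY : ∀ᵐ ω ∂μ, Y ω = f (X ω))
    (hatom : μ {ω | Y ω = f x} = 0) (hmin : IsMinOn f (Ici x) x) :
    {ω | Y ω ≤ f x} ≤ᵐ[μ] {ω | X ω ≤ x} := by
  rw [measure_eq_zero_iff_ae_notMem] at hatom
  filter_upwards [hXY, hatom] with ω hω hne hωY
  by_contra hωX
  exact hne (le_antisymm hωY (hω ▸ hmin (mem_Ici.2 (le_of_not_ge hωX))))

lemma ae_subset_of_isMaxOn (hXY : ∀ᵐ ω ∂μ, Y ω = f (X ω)) (hmax : IsMaxOn f (Iic x) x) :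
    {ω | X ω ≤ x} ≤ᵐ[μ] {ω | Y ω ≤ f x} := by
  filter_upwards [hXY] with ω hω hωX
  show Y ω ≤ f x
  exact hω ▸ hmax (mem_Iic.2 hωX)

lemma measure_compl_union_null_of_isMaxOn (hXY : ∀ᵐ ω ∂μ, Y ω = f (X ω))
    (hmax : IsMaxOn f (Ici x) x) :
    μ ({ω | X ω ≤ x} ∪ {ω | Y ω ≤ f x})ᶜ = 0 := by
  rw [measure_eq_zero_iff_ae_notMem]
  filter_upwards [hXY] with ω hω hωc
  simp only [mem_compl_iff, mem_union, mem_ofPred_eq, not_or, not_le] at hωc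
  exact hωc.2.not_ge (hω ▸ hmax (mem_Ici.2 hωc.1.le))

end SublevelEvents

theorem relDist_eq_one_of_single_optimum_general
    {Ω : Type*} [MeasurableSpace Ω] (μ : Measure Ω) [IsProbabilityMeasure μ]
    (X Y : Ω → ℝ) (hY : Measurable Y)
    (f : ℝ → ℝ) (x0 : ℝ)
    (hf : (AntitoneOn f (Set.Iic x0) ∧ MonotoneOn f (Set.Ici x0)) ∨
          (MonotoneOn f (Set.Iic x0) ∧ AntitoneOn f (Set.Ici x0)))
    (hXY : ∀ᵐ ω ∂μ, Y ω = f (X ω))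
    (hatomless : ∀ c : ℝ, μ {ω | Y ω = c} = 0) :
    ∀ x : ℝ,
      0 < (μ {ω | X ω ≤ x}).toReal → (μ {ω | X ω ≤ x}).toReal < 1 →
      0 < (μ {ω | Y ω ≤ f x}).toReal → (μ {ω | Y ω ≤ f x}).toReal < 1 →
      relDist (μ {ω | X ω ≤ x ∧ Y ω ≤ f x}).toReal
        (μ {ω | X ω ≤ x}).toReal (μ {ω | Y ω ≤ f x}).toReal = 1 := by
  intro x hA0 hA1 hB0 hB1
  simp only [← measureReal_def, ofPred_and] at hA0 hA1 hB0 hB1 ⊢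
  have hB : MeasurableSet {ω | Y ω ≤ f x} := measurableSet_le hY measurable_const
  have hatom := hatomless (f x)
  rcases hf with ⟨hanti, hmono⟩ | ⟨hmono, hanti⟩ <;> rcases le_total x x0 with hx | hx
  · rw [measureReal_inter_eq_max_of_inter_null hB (measure_inter_null_of_isMinOn hXY hatom
      fun t ht => hanti (mem_Iic.2 (le_trans ht hx)) hx ht)]
    exact relDist_max_self hA0 hA1 hB0 hB1
  · rw [measureReal_inter_eq_min_of_ae_supset (ae_subset_of_isMinOn hXY hatom
      fun t ht => hmono hx (mem_Ici.2 (le_trans hx ht)) ht)]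
    exact relDist_min_self hA0 hA1 hB0 hB1
  · rw [measureReal_inter_eq_min_of_ae_subset (ae_subset_of_isMaxOn hXY
      fun t ht => hmono (mem_Iic.2 (le_trans ht hx)) hx ht)]
    exact relDist_min_self hA0 hA1 hB0 hB1
  · rw [measureReal_inter_eq_max_of_union_ae_univ hB (measure_compl_union_null_of_isMaxOn hXY
      fun t ht => hanti hx (mem_Ici.2 (le_trans hx ht)) ht)]
    exact relDist_max_self hA0 hA1 hB0 hB1

/-- Corollary 2 of the paper: if `f` has a single optimum (either a single
global minimum, i.e. nonincreasing on `(−∞, x0]` and nondecreasing on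
`[x0, ∞)`, or a single global maximum, i.e. nondecreasing then nonincreasing),
`Y = f(X)` almost surely, and the law of `Y` is atomless, then `λ(x, f(x)) = 1`
at every `x` with `0 < F1(x) < 1` and `0 < F2(f(x)) < 1`. -/
theorem relDist_eq_one_of_single_optimum
    {Ω : Type*} [MeasurableSpace Ω] (μ : Measure Ω) [IsProbabilityMeasure μ]
    (X Y : Ω → ℝ) (hX : Measurable X) (hY : Measurable Y)
    (f : ℝ → ℝ) (x0 : ℝ)
    (hf : (AntitoneOn f (Set.Iic x0) ∧ MonotoneOn f (Set.Ici x0)) ∨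
          (MonotoneOn f (Set.Iic x0) ∧ AntitoneOn f (Set.Ici x0)))
    (hXY : ∀ᵐ ω ∂μ, Y ω = f (X ω))
    (hatomless : ∀ c : ℝ, μ {ω | Y ω = c} = 0) :
    ∀ x : ℝ,
      0 < (μ {ω | X ω ≤ x}).toReal → (μ {ω | X ω ≤ x}).toReal < 1 →
      0 < (μ {ω | Y ω ≤ f x}).toReal → (μ {ω | Y ω ≤ f x}).toReal < 1 →
      relDist (μ {ω | X ω ≤ x ∧ Y ω ≤ f x}).toReal
        (μ {ω | X ω ≤ x}).toReal (μ {ω | Y ω ≤ f x}).toReal = 1 :=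
  relDist_eq_one_of_single_optimum_general μ X Y hY f x0 hf hXY hatomless
end

section
/- Let X be a real-valued random variable whose law μ satisfies μ([r,s]) = 1 and μ(I) > 0 for every nonempty open interval I ⊆ (r,s), where r < s. Let f : ℝ → ℝ be continuous, Y = f(X) almost surely, and let ymax be the maximum of f on [r,s]. Suppose there exist b, c ∈ (r,s) with b < c and f(b) = f(c) = ymax (two global maxima), and there exist p ∈ (r,b) and q ∈ (b,c) with f(p) < ymax and f(q) < ymax. Then there exists a point (x,y) such that max(F1(x) + F2(y) − 1, 0) < H(x,y) < min(F1(x), F2(y)); in particular λ(x,y) < 1 at this point. -/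
/-!
Put the vertical line `x` between `b` and `q` and the horizontal line `y` strictly between
`max (f p) (f q)` and `ymax`. Near `p`, `b`, `q`, `c` the graph of `f` lies below, above,
below and above `y` respectively, so each of the four quadrants cut out by `(x, y)` contains
a piece of the graph over a small interval, which `X` charges. All four quadrants having
positive probability is exactly a strict version of the Fréchet–Hoeffding bounds at `(x, y)`.
-/

open MeasureTheory Set

lemma relDist_lt_one {H F1 F2 : ℝ} (hlow : max (F1 + F2 - 1) 0 < H) (hup : H < min F1 F2) :
    relDist H F1 F2 < 1 := by
  have hH : 0 < H := (le_max_right _ _).trans_lt hlow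
  unfold relDist
  split_ifs with hprod
  · rw [div_lt_one (by linarith)]
    linarith
  · rw [div_lt_one_of_neg (by linarith)]
    linarith

section FrechetHoeffding

variable {Ω : Type*} [MeasurableSpace Ω] {μ : Measure Ω} {A B : Set Ω}

lemma measureReal_inter_lt_min [IsFiniteMeasure μ] (hA : MeasurableSet A) (hB : MeasurableSet B)
    (hAB : 0 < μ (A \ B)) (hBA : 0 < μ (B \ A)) :
    μ.real (A ∩ B) < min (μ.real A) (μ.real B) := by
  have hsplitA := measureReal_inter_add_sdiff (μ := μ) (s := A) hB
  have hsplitB := measureReal_inter_add_sdiff (μ := μ) (s := B) hA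
  rw [inter_comm] at hsplitB
  have hposA : 0 < μ.real (A \ B) := ENNReal.toReal_pos hAB.ne' (measure_ne_top μ _)
  have hposB : 0 < μ.real (B \ A) := ENNReal.toReal_pos hBA.ne' (measure_ne_top μ _)
  exact lt_min (by linarith) (by linarith)

lemma max_measureReal_add_sub_one_lt_measureReal_inter [IsProbabilityMeasure μ]
    (hA : MeasurableSet A) (hB : MeasurableSet B)
    (hAB : 0 < μ (A ∩ B)) (hAcBc : 0 < μ (Aᶜ ∩ Bᶜ)) :
    max (μ.real A + μ.real B - 1) 0 < μ.real (A ∩ B) := by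
  have hunion := measureReal_union_add_inter (μ := μ) (s := A) hB
  have hcompl := probReal_add_probReal_compl (μ := μ) (hA.union hB)
  rw [compl_union] at hcompl
  have hpos : 0 < μ.real (A ∩ B) := ENNReal.toReal_pos hAB.ne' (measure_ne_top μ _)
  have hposc : 0 < μ.real (Aᶜ ∩ Bᶜ) := ENNReal.toReal_pos hAcBc.ne' (measure_ne_top μ _)
  exact max_lt (by linarith) hpos

end FrechetHoeffding

lemma measure_mem_Ioo_and_mem_pos
    {Ω : Type*} [MeasurableSpace Ω] {μ : Measure Ω} {X Y : Ω → ℝ} {f : ℝ → ℝ} {r s : ℝ}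
    (hcharge : ∀ a b : ℝ, r ≤ a → a < b → b ≤ s → 0 < μ (X ⁻¹' Ioo a b))
    (hXY : ∀ᵐ ω ∂μ, Y ω = f (X ω)) (hf : Continuous f)
    {V : Set ℝ} (hV : IsOpen V) {lo t hi : ℝ} (hr : r ≤ lo) (hlo : lo < t) (hhi : t < hi)
    (hs : hi ≤ s) (ht : f t ∈ V) :
    0 < μ {ω | X ω ∈ Ioo lo hi ∧ Y ω ∈ V} := by
  have hnhds : f ⁻¹' V ∩ Ioo lo hi ∈ nhds t :=
    ((hV.preimage hf).inter isOpen_Ioo).mem_nhds ⟨ht, hlo, hhi⟩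
  obtain ⟨l, u, htlu, hsub⟩ := mem_nhds_iff_exists_Ioo_subset.1 hnhds
  have hlu : l < u := htlu.1.trans htlu.2
  obtain ⟨hlol, huhi⟩ := (Ioo_subset_Ioo_iff hlu).1 (hsub.trans inter_subset_right)
  calc 0 < μ (X ⁻¹' Ioo l u) := hcharge l u (hr.trans hlol) hlu (huhi.trans hs)
    _ ≤ μ {ω | X ω ∈ Ioo lo hi ∧ Y ω ∈ V} := by
      refine measure_mono_ae ?_
      filter_upwards [hXY] with ω hω hmem
      exact ⟨(hsub hmem).2, hω ▸ (hsub hmem).1⟩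

theorem exists_relDist_lt_one_of_two_global_maxima_general
    {Ω : Type*} [MeasurableSpace Ω] (μ : Measure Ω) [IsProbabilityMeasure μ]
    (X Y : Ω → ℝ) (hX : Measurable X) (hY : Measurable Y)
    (r s : ℝ)
    (hcharge : ∀ a b : ℝ, r ≤ a → a < b → b ≤ s → 0 < μ (X ⁻¹' Set.Ioo a b))
    (f : ℝ → ℝ) (hfc : Continuous f)
    (hXY : ∀ᵐ ω ∂μ, Y ω = f (X ω))
    (ymax : ℝ)
    (b c : ℝ) (hb : b ∈ Set.Ioo r s) (hc : c ∈ Set.Ioo r s)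
    (hfb : f b = ymax) (hfc' : f c = ymax)
    (p : ℝ) (hp : p ∈ Set.Ioo r b) (hfp : f p < ymax)
    (q : ℝ) (hq : q ∈ Set.Ioo b c) (hfq : f q < ymax) :
    ∃ x y : ℝ,
      max ((μ {ω | X ω ≤ x}).toReal + (μ {ω | Y ω ≤ y}).toReal - 1) 0
        < (μ {ω | X ω ≤ x ∧ Y ω ≤ y}).toReal ∧
      (μ {ω | X ω ≤ x ∧ Y ω ≤ y}).toReal
        < min (μ {ω | X ω ≤ x}).toReal (μ {ω | Y ω ≤ y}).toReal ∧
      relDist (μ {ω | X ω ≤ x ∧ Y ω ≤ y}).toReal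
        (μ {ω | X ω ≤ x}).toReal (μ {ω | Y ω ≤ y}).toReal < 1 := by
  set x := (b + q) / 2 with hx
  set y := (max (f p) (f q) + ymax) / 2 with hy
  have hfpy : f p < y := by linarith [le_max_left (f p) (f q)]
  have hfqy : f q < y := by linarith [le_max_right (f p) (f q)]
  have hymax : y < ymax := by linarith [max_lt hfp hfq]
  have hpx : p < x := by linarith [hp.2, hq.1]
  have hbx : b < x := by linarith [hq.1]
  have hxq : x < q := by linarith [hq.1]
  have hxc : x < c := by linarith [hq.2]
  have hrx : r ≤ x := by linarith [hb.1]
  have hxs : x ≤ s := by linarith [hq.2, hc.2]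
  have quadrant := @measure_mem_Ioo_and_mem_pos _ _ μ X Y f r s hcharge hXY hfc
  set A := {ω | X ω ≤ x}
  set B := {ω | Y ω ≤ y}
  have hA : MeasurableSet A := hX measurableSet_Iic
  have hB : MeasurableSet B := hY measurableSet_Iic
  have hAB : 0 < μ (A ∩ B) :=
    (quadrant isOpen_Iio le_rfl hp.1 hpx hxs hfpy).trans_le <|
      measure_mono fun ω hω => ⟨le_of_lt hω.1.2, le_of_lt (mem_Iio.1 hω.2)⟩
  have hAmB : 0 < μ (A \ B) :=
    (quadrant isOpen_Ioi le_rfl hb.1 hbx hxs (hfb ▸ hymax)).trans_le <|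
      measure_mono fun ω hω => ⟨le_of_lt hω.1.2, not_le.2 (mem_Ioi.1 hω.2)⟩
  have hBmA : 0 < μ (B \ A) :=
    (quadrant isOpen_Iio hrx hxq (hq.2.trans hc.2) le_rfl hfqy).trans_le <|
      measure_mono fun ω hω => ⟨le_of_lt (mem_Iio.1 hω.2), not_le.2 hω.1.1⟩
  have hAcBc : 0 < μ (Aᶜ ∩ Bᶜ) :=
    (quadrant isOpen_Ioi hrx hxc hc.2 le_rfl (hfc' ▸ hymax)).trans_le <|
      measure_mono fun ω hω => ⟨not_le.2 hω.1.1, not_le.2 (mem_Ioi.1 hω.2)⟩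
  have hlow := max_measureReal_add_sub_one_lt_measureReal_inter hA hB hAB hAcBc
  have hup := measureReal_inter_lt_min hA hB hAmB hBmA
  exact ⟨x, y, hlow, hup, relDist_lt_one hlow hup⟩

/-- Theorem 5 of the paper: let the law of `X` be carried by `[r,s]` and charge
every nonempty open subinterval of `(r,s)`, let `f` be continuous with maximum
value `ymax` on `[r,s]`, attained at two interior points `b < c`, with
`f(p) < ymax` for some `p ∈ (r,b)` and `f(q) < ymax` for some `q ∈ (b,c)`, and
let `Y = f(X)` almost surely. Then there is a point `(x,y)` at which the joint
CDF lies strictly between the Fréchet–Hoeffding bounds; in particular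
`λ(x,y) < 1` there. -/
theorem exists_relDist_lt_one_of_two_global_maxima
    {Ω : Type*} [MeasurableSpace Ω] (μ : Measure Ω) [IsProbabilityMeasure μ]
    (X Y : Ω → ℝ) (hX : Measurable X) (hY : Measurable Y)
    (r s : ℝ) (hrs : r < s)
    (hsupp : μ (X ⁻¹' Set.Icc r s) = 1)
    (hcharge : ∀ a b : ℝ, r ≤ a → a < b → b ≤ s → 0 < μ (X ⁻¹' Set.Ioo a b))
    (f : ℝ → ℝ) (hfc : Continuous f)
    (hXY : ∀ᵐ ω ∂μ, Y ω = f (X ω))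
    (ymax : ℝ) (hmax : ∀ t ∈ Set.Icc r s, f t ≤ ymax)
    (b c : ℝ) (hb : b ∈ Set.Ioo r s) (hc : c ∈ Set.Ioo r s) (hbc : b < c)
    (hfb : f b = ymax) (hfc' : f c = ymax)
    (p : ℝ) (hp : p ∈ Set.Ioo r b) (hfp : f p < ymax)
    (q : ℝ) (hq : q ∈ Set.Ioo b c) (hfq : f q < ymax) :
    ∃ x y : ℝ,
      max ((μ {ω | X ω ≤ x}).toReal + (μ {ω | Y ω ≤ y}).toReal - 1) 0
        < (μ {ω | X ω ≤ x ∧ Y ω ≤ y}).toReal ∧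
      (μ {ω | X ω ≤ x ∧ Y ω ≤ y}).toReal
        < min (μ {ω | X ω ≤ x}).toReal (μ {ω | Y ω ≤ y}).toReal ∧
      relDist (μ {ω | X ω ≤ x ∧ Y ω ≤ y}).toReal
        (μ {ω | X ω ≤ x}).toReal (μ {ω | Y ω ≤ y}).toReal < 1 :=
  exists_relDist_lt_one_of_two_global_maxima_general μ X Y hX hY r s hcharge f hfc hXY ymax b c hb
    hc hfb hfc' p hp hfp q hq hfq
end
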